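/- The blind dominance relation on quantitative automata is not reflexive: there exists a LimSup-automaton A such that there is no resolver g of A satisfying A^f(w) ≤ A^g(w) for all resolvers f of A and all infinite words w. Concretely, take A over {a,b} with s0 --a--> s1, s1 --a--> s2 or s3 (nondeterministic), s2 --a--> weight-1 sink and s2 --b--> weight-0 sink, s3 --b--> weight-1 sink and s3 --a--> weight-0 sink, all other transitions to a weight-0 sink. -/

import Mathlib

open Filter

/-- A quantitative automaton over alphabet `σ` with state type `Q`:
initial state, transition relation (required total), and transition weights. -/
structure QAut (σ : Type) (Q : Type) where
  init : Q
  Δ : Q → σ → Q → Prop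
  total : ∀ q a, ∃ q', Δ q a q'
  μ : Q → σ → Q → ℕ

namespace QAut

variable {σ Q : Type}

/-- The last state of a history (a finite sequence of (letter, state) steps from the
initial state). -/
def hlast (A : QAut σ Q) (h : List (σ × Q)) : Q :=
  (h.getLast?.map Prod.snd).getD A.init

/-- A resolver: maps each history and next letter to a successor state consistent with Δ. -/
structure Resolver (A : QAut σ Q) where
  f : List (σ × Q) → σ → Q
  consistent : ∀ h a, A.Δ (A.hlast h) a (f h a)

/-- The history produced by a resolver on the first `n` letters of a word. -/
def Resolver.hist {A : QAut σ Q} (r : Resolver A) (w : ℕ → σ) : ℕ → List (σ × Q)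
  | 0 => []
  | n + 1 => r.hist w n ++ [(w n, r.f (r.hist w n) (w n))]

/-- The unique run induced by a resolver on a word. -/
def Resolver.run {A : QAut σ Q} (r : Resolver A) (w : ℕ → σ) : ℕ → Q
  | 0 => A.init
  | n + 1 => r.f (r.hist w n) (w n)

/-- The weight sequence of the run induced by a resolver on a word. -/
def Resolver.wt {A : QAut σ Q} (r : Resolver A) (w : ℕ → σ) (n : ℕ) : ℕ :=
  A.μ (r.run w n) (w n) (r.run w (n + 1))

/-- `A^f(w)`: the value (under value function `ν`) of the run induced by resolver `f` on `w`. -/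
noncomputable def val (A : QAut σ Q) (ν : (ℕ → ℕ) → ℝ) (r : Resolver A) (w : ℕ → σ) : ℝ :=
  ν (r.wt w)

/-- `A_sup(w)`: the supremum over all resolvers of `A^f(w)`. -/
noncomputable def supVal (A : QAut σ Q) (ν : (ℕ → ℕ) → ℝ) (w : ℕ → σ) : ℝ :=
  ⨆ r : Resolver A, A.val ν r w

end QAut

/-- The `Inf` value function. -/
noncomputable def vInf (x : ℕ → ℕ) : ℝ := ⨅ n, (x n : ℝ)

/-- The `Sup` value function. -/
noncomputable def vSup (x : ℕ → ℕ) : ℝ := ⨆ n, (x n : ℝ)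

/-- The `LimSup` value function. -/
noncomputable def vLimSup (x : ℕ → ℕ) : ℝ := Filter.limsup (fun n => (x n : ℝ)) Filter.atTop

/-- The `LimInf` value function. -/
noncomputable def vLimInf (x : ℕ → ℕ) : ℝ := Filter.liminf (fun n => (x n : ℝ)) Filter.atTop

/-- `ν ∈ {Inf, Sup, LimSup, LimInf}`. -/
def IsClassic (ν : (ℕ → ℕ) → ℝ) : Prop :=
  ν = vInf ∨ ν = vSup ∨ ν = vLimSup ∨ ν = vLimInf

/-- States of the automaton `A` of the separating example:
`s0 --a--> s1`, then `s1 --a--> s2` or `s3`; `s2 --a-->` weight-1 sink `top`,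
`s2 --b-->` weight-0 sink `bot`; `s3 --b--> top`, `s3 --a--> bot`;
all other transitions go to `bot`. -/
inductive SA where
  | s0 | s1 | s2 | s3 | top | bot
  deriving DecidableEq

instance : Fintype SA where
  elems := {SA.s0, SA.s1, SA.s2, SA.s3, SA.top, SA.bot}
  complete := by intro x; cases x <;> simp

/-- Successor lists of `A` (letters: `a = true`, `b = false`). -/
def Anext : SA → Bool → List SA
  | .s0, true => [.s1]
  | .s0, false => [.bot]
  | .s1, true => [.s2, .s3]
  | .s1, false => [.bot]
  | .s2, true => [.top]
  | .s2, false => [.bot]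
  | .s3, true => [.bot]
  | .s3, false => [.top]
  | .top, _ => [.top]
  | .bot, _ => [.bot]

/-- The concrete LimSup-automaton `A` of the separating example. -/
def AutA : QAut Bool SA where
  init := .s0
  Δ := fun q a q' => q' ∈ Anext q a
  total := by decide
  μ := fun q _ q' => if q = SA.top ∧ q' = SA.top then 1 else 0


instance : Inhabited SA := ⟨.bot⟩

section Aux

variable {σ Q : Type}

lemma hlast_hist (A : QAut σ Q) (r : A.Resolver) (w : ℕ → σ) :
    ∀ n, A.hlast (r.hist w n) = r.run w n
  | 0 => rfl
  | n+1 => by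
    simp [QAut.Resolver.hist, QAut.Resolver.run, QAut.hlast, List.getLast?_concat]

end Aux

lemma run_mem (r : AutA.Resolver) (w : ℕ → Bool) (n : ℕ) :
    r.run w (n+1) ∈ Anext (r.run w n) (w n) := by
  have h := r.consistent (r.hist w n) (w n)
  rw [hlast_hist] at h
  exact h

lemma top_abs (r : AutA.Resolver) (w : ℕ → Bool) (n : ℕ) (h : r.run w n = SA.top) :
    ∀ m, n ≤ m → r.run w m = SA.top := by
  intro m hm
  induction m, hm using Nat.le_induction with
  | base => exact h
  | succ m hm ih =>
    have := run_mem r w m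
    rw [ih] at this
    simpa [Anext] using this

lemma bot_abs (r : AutA.Resolver) (w : ℕ → Bool) (n : ℕ) (h : r.run w n = SA.bot) :
    ∀ m, n ≤ m → r.run w m = SA.bot := by
  intro m hm
  induction m, hm using Nat.le_induction with
  | base => exact h
  | succ m hm ih =>
    have := run_mem r w m
    rw [ih] at this
    simpa [Anext] using this

lemma val_one (r : AutA.Resolver) (w : ℕ → Bool) (n : ℕ) (h : r.run w n = SA.top) :
    AutA.val vLimSup r w = 1 := by
  have hev : (fun m => ((r.wt w m : ℕ) : ℝ)) =ᶠ[Filter.atTop] fun _ => (1 : ℝ) := by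
    refine Filter.eventually_atTop.2 ⟨n, fun m hm => ?_⟩
    have h1 := top_abs r w n h m hm
    have h2 := top_abs r w n h (m+1) (le_trans hm (Nat.le_succ m))
    simp [QAut.Resolver.wt, AutA, h1, h2]
    exact ⟨h1, h2⟩
  unfold QAut.val vLimSup
  rw [Filter.limsup_congr hev, Filter.limsup_const]

lemma val_zero (r : AutA.Resolver) (w : ℕ → Bool) (n : ℕ) (h : r.run w n = SA.bot) :
    AutA.val vLimSup r w = 0 := by
  have hnt : ∀ m, r.run w m ≠ SA.top := by
    intro m hm
    rcases le_total m n with h' | h'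
    · have := top_abs r w m hm n h'
      rw [h] at this; exact SA.noConfusion this
    · have := bot_abs r w n h m h'
      rw [hm] at this; exact SA.noConfusion this
  have hw : ∀ m, r.wt w m = 0 := by
    intro m
    simp [QAut.Resolver.wt, AutA, hnt m]
    exact fun h => absurd h (hnt m)
  have : (fun m => ((r.wt w m : ℕ) : ℝ)) = fun _ => (0 : ℝ) := by
    funext m; rw [hw m]; norm_num
  unfold QAut.val vLimSup
  rw [this, Filter.limsup_const]

def pick (c : SA) (q : SA) (a : Bool) : SA :=
  if q = SA.s1 ∧ a = true then c else (Anext q a).headI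

lemma pick_mem (c : SA) (hc : c ∈ Anext SA.s1 true) :
    ∀ q a, pick c q a ∈ Anext q a := by
  intro q a
  unfold pick
  split
  · rename_i hcond
    rw [hcond.1, hcond.2]
    exact hc
  · revert q a; decide

def res (c : SA) (hc : c ∈ Anext SA.s1 true) : AutA.Resolver where
  f := fun h a => pick c (AutA.hlast h) a
  consistent := fun h a => pick_mem c hc _ _

lemma res_run_succ (c : SA) (hc : c ∈ Anext SA.s1 true) (w : ℕ → Bool) (n : ℕ) :
    (res c hc).run w (n+1) = pick c ((res c hc).run w n) (w n) := by
  show pick c (AutA.hlast ((res c hc).hist w n)) (w n) = _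
  rw [hlast_hist]


/-- Blind dominance is not reflexive: the concrete LimSup-automaton
`A` admits no resolver `g` with `A^f(w) ≤ A^g(w)` for all resolvers `f` and words `w`. -/
theorem blind_dominance_not_reflexive :
    ¬ ∃ g : AutA.Resolver, ∀ f : AutA.Resolver, ∀ w : ℕ → Bool,
        AutA.val vLimSup f w ≤ AutA.val vLimSup g w := by
  rintro ⟨g, hg⟩
  -- On any word starting with two a's, g's run after two steps is `g.f [(true, s1)] true`.
  have key : ∀ w : ℕ → Bool, w 0 = true → w 1 = true →
      g.run w 2 = g.f [(true, SA.s1)] true := by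
    intro w h0 h1
    have hr1 : g.run w 1 = SA.s1 := by
      have h := run_mem g w 0
      rw [show g.run w 0 = SA.s0 from rfl, h0] at h
      simp only [Anext, List.mem_singleton] at h
      exact h
    have hh : g.hist w 1 = [(w 0, g.run w 1)] := rfl
    show g.f (g.hist w 1) (w 1) = _
    rw [hh, hr1, h0, h1]
  set c := g.f [(true, SA.s1)] true with hcdef
  have hcm : c ∈ Anext SA.s1 true := by
    have h2 : g.run (fun _ => true) 2 = c := key _ rfl rfl
    have hr1 : g.run (fun _ => true) 1 = SA.s1 := by
      have h := run_mem g (fun _ => true) 0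
      rw [show g.run (fun _ => true) 0 = SA.s0 from rfl] at h
      simp only [Anext, List.mem_singleton] at h
      exact h
    have h := run_mem g (fun _ => true) 1
    rw [hr1, h2] at h
    exact h
  have hcc : c = SA.s2 ∨ c = SA.s3 := by simpa [Anext] using hcm
  rcases hcc with hc2 | hc3
  · -- g picks s2; use word aab^ω and resolver picking s3
    set w : ℕ → Bool := fun n => decide (n < 2) with hw
    have hw0 : w 0 = true := rfl
    have hw1 : w 1 = true := rfl
    have hw2 : w 2 = false := rfl
    have hg2 : g.run w 2 = SA.s2 := by rw [key w hw0 hw1]; exact hc2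
    have hg3 : g.run w 3 = SA.bot := by
      have h := run_mem g w 2
      rw [hg2, hw2] at h
      simp only [Anext, List.mem_singleton] at h
      exact h
    have hgv : AutA.val vLimSup g w = 0 := val_zero g w 3 hg3
    have hs3 : SA.s3 ∈ Anext SA.s1 true := by simp [Anext]
    set f := res SA.s3 hs3 with hf
    have hf1 : f.run w 1 = SA.s1 := by
      rw [show f.run w 1 = f.run w (0+1) from rfl, res_run_succ, hw0]
      rfl
    have hf2 : f.run w 2 = SA.s3 := by
      rw [show f.run w 2 = f.run w (1+1) from rfl, res_run_succ, hf1, hw1]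
      rfl
    have hf3 : f.run w 3 = SA.top := by
      rw [show f.run w 3 = f.run w (2+1) from rfl, res_run_succ, hf2, hw2]
      rfl
    have hfv : AutA.val vLimSup f w = 1 := val_one f w 3 hf3
    have := hg f w
    rw [hgv, hfv] at this
    linarith
  · -- g picks s3; use word a^ω and resolver picking s2
    set w : ℕ → Bool := fun _ => true with hw
    have hg2 : g.run w 2 = SA.s3 := by rw [key w rfl rfl]; exact hc3
    have hg3 : g.run w 3 = SA.bot := by
      have h := run_mem g w 2
      rw [hg2, show w 2 = true from rfl] at h
      simp only [Anext, List.mem_singleton] at h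
      exact h
    have hgv : AutA.val vLimSup g w = 0 := val_zero g w 3 hg3
    have hs2 : SA.s2 ∈ Anext SA.s1 true := by simp [Anext]
    set f := res SA.s2 hs2 with hf
    have hf1 : f.run w 1 = SA.s1 := by
      rw [show f.run w 1 = f.run w (0+1) from rfl, res_run_succ]
      rfl
    have hf2 : f.run w 2 = SA.s2 := by
      rw [show f.run w 2 = f.run w (1+1) from rfl, res_run_succ, hf1]
      rfl
    have hf3 : f.run w 3 = SA.top := by
      rw [show f.run w 3 = f.run w (2+1) from rfl, res_run_succ, hf2]
      rfl
    have hfv : AutA.val vLimSup f w = 1 := val_one f w 3 hf3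
    have := hg f w
    rw [hgv, hfv] at this
    linarith
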